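/- For any nonzero function f : ℤ_p → ℂ where p is prime, |supp(f)| + |supp(f̂)| ≥ p + 1 (in particular it exceeds p). -/

import Mathlib

open Finset
open scoped Classical BigOperators

/-- Fourier transform of `f : ℤ_p → ℂ`:  `f̂ r = ∑ x, f x · e^{2πi r x / p}`. -/
noncomputable def fourierZMod {p : ℕ} [NeZero p] (f : ZMod p → ℂ) (r : ZMod p) : ℂ :=
  ∑ x : ZMod p, f x * Complex.exp (2 * Real.pi * Complex.I * ((r.val : ℂ) * (x.val : ℂ)) / p)

/-!
Everything rests on Chebotarev's theorem: every square minor `(ζ ^ (b i * s j))` of the `p × p`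
DFT matrix is invertible. Granting it, if `|supp f| + |supp f̂| ≤ p` we may pick `|supp f|`
frequencies at which `f̂` vanishes, and the restriction of `f` to its support is a nonzero kernel
vector of the corresponding minor.

Chebotarev's theorem is proved following Frenkel, in `ℤ[ζ] = ℤ[X] / (Φ_p)`, which maps onto `𝔽_p`
by `ζ ↦ 1` with kernel `(ζ - 1)`. A kernel vector `c` gives the polynomial `g = ∑ c_j X ^ s_j`
with the `n` distinct roots `ζ ^ b_i`, so its reduction `ḡ ∈ 𝔽_p[X]` is divisible by `(X - 1) ^ n`
while having at most `n` terms and degree `< p`. This forces `ḡ = 0`: the operator `X d/dX - m`,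
with `m` the lowest exponent, removes exactly one term and one factor `X - 1`. Hence `ζ - 1`
divides every kernel vector, and infinite descent in the Noetherian domain `ℤ[ζ]` gives `c = 0`.
-/

open Polynomial
open scoped Matrix

namespace Polynomial

variable {R : Type*} [CommRing R]

theorem coeff_X_mul_derivative_sub_C_mul (g : R[X]) (m i : ℕ) :
    (X * derivative g - C (m : R) * g).coeff i = ((i : R) - m) * g.coeff i := by
  rcases i with _ | i
  · simp
  · rw [coeff_sub, coeff_X_mul, coeff_derivative, coeff_C_mul]
    push_cast
    ring

theorem X_sub_C_pow_dvd_X_mul_derivative_sub_C_mul {a : R} {k : ℕ} {g : R[X]}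
    (h : (X - C a) ^ (k + 1) ∣ g) (r : R) : (X - C a) ^ k ∣ X * derivative g - C r * g :=
  dvd_sub (dvd_mul_of_dvd_right (pow_sub_one_dvd_derivative_of_pow_dvd h) _)
    (dvd_mul_of_dvd_right ((pow_dvd_pow _ k.le_succ).trans h) _)

variable [IsDomain R] {p : ℕ} [CharP R p]

theorem support_X_mul_derivative_sub_C_mul_natTrailingDegree {g : R[X]} (hg : g.natDegree < p) :
    (X * derivative g - C (g.natTrailingDegree : R) * g).support =
      g.support.erase g.natTrailingDegree := by
  ext i
  simp only [mem_support_iff, mem_erase, coeff_X_mul_derivative_sub_C_mul, mul_ne_zero_iff,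
    sub_ne_zero, ne_eq, and_congr_left_iff]
  intro hi
  rw [CharP.natCast_eq_natCast R p, not_iff_not]
  exact ⟨fun h => h.eq_of_lt_of_lt ((le_natDegree_of_ne_zero hi).trans_lt hg)
    ((natTrailingDegree_le_natDegree g).trans_lt hg), fun h => h ▸ rfl⟩

theorem not_X_sub_C_pow_card_support_dvd {a : R} (ha : a ≠ 0) {g : R[X]} (hg : g ≠ 0)
    (hdeg : g.natDegree < p) : ¬(X - C a) ^ #g.support ∣ g := by
  induction hk : #g.support generalizing g with
  | zero => exact absurd (support_eq_empty.mp (card_eq_zero.mp hk)) hg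
  | succ k ih =>
    intro hdvd
    rcases k.eq_zero_or_pos with rfl | hk0
    · obtain ⟨m, b, hb, rfl⟩ := card_support_eq_one.mp hk
      have hroot := (dvd_iff_isRoot.mp (by simpa using hdvd)).eq_zero
      rw [eval_C_mul, eval_pow, eval_X] at hroot
      exact mul_ne_zero hb (pow_ne_zero m ha) hroot
    set g₁ := X * derivative g - C (g.natTrailingDegree : R) * g
    have hsupp := support_X_mul_derivative_sub_C_mul_natTrailingDegree hdeg
    have hk₁ : #g₁.support = k := by
      rw [hsupp, card_erase_of_mem (natTrailingDegree_mem_support_of_nonzero hg), hk,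
        Nat.add_sub_cancel]
    have hg₁ : g₁ ≠ 0 := by
      intro h
      rw [h, support_zero, card_empty] at hk₁
      omega
    have hdeg₁ : g₁.natDegree < p := by
      refine lt_of_le_of_lt (natDegree_le_iff_coeff_eq_zero.mpr fun N hN => ?_) hdeg
      rw [coeff_X_mul_derivative_sub_C_mul, coeff_eq_zero_of_natDegree_lt hN, mul_zero]
    exact ih hg₁ hdeg₁ hk₁ (X_sub_C_pow_dvd_X_mul_derivative_sub_C_mul hdvd _)

end Polynomial

theorem Matrix.eq_zero_of_mulVec_eq_zero_of_forall_dvd {R ι κ : Type*} [CommRing R] [IsDomain R]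
    [WfDvdMonoid R] [Fintype κ] {M : Matrix ι κ R} {π : R} (hπ0 : π ≠ 0) (hπ : ¬IsUnit π)
    (h : ∀ c, M *ᵥ c = 0 → ∀ j, π ∣ c j) {c : κ → R} (hc : M *ᵥ c = 0) : c = 0 := by
  have pow_dvd : ∀ k (c : κ → R), M *ᵥ c = 0 → ∀ j, π ^ k ∣ c j := by
    intro k
    induction k with
    | zero => simp
    | succ k ih =>
      intro c hc j
      choose d hd using h c hc
      have hcd : c = π • d := _root_.funext hd
      have hMd : M *ᵥ d = 0 := by
        rw [hcd, Matrix.mulVec_smul, smul_eq_zero] at hc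
        exact hc.resolve_left hπ0
      rw [hd j, pow_succ']
      exact mul_dvd_mul_left π (ih d hMd j)
  funext j
  by_contra hcj
  obtain ⟨k, hk⟩ := FiniteMultiplicity.of_not_isUnit hπ hcj
  exact hk (pow_dvd _ c hc j)

namespace Polynomial

variable {R ι : Type*} [Semiring R] [Fintype ι] (e : ι → ℕ) (a : ι → R)

theorem coeff_sum_monomial (k : ℕ) :
    (∑ i, monomial (e i) (a i)).coeff k = ∑ i with e i = k, a i := by
  simp [coeff_monomial, Finset.sum_ite]

theorem coeff_sum_monomial_of_injective (he : Function.Injective e) (j : ι) :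
    (∑ i, monomial (e i) (a i)).coeff (e j) = a j := by
  rw [coeff_sum_monomial]
  simp [he.eq_iff, sum_filter]

theorem card_support_sum_monomial_le : #(∑ i, monomial (e i) (a i)).support ≤ Fintype.card ι := by
  refine (card_le_card fun k hk => ?_).trans (card_image_le (s := univ) (f := e))
  obtain ⟨i, hi, -⟩ :=
    exists_ne_zero_of_sum_ne_zero (coeff_sum_monomial e a k ▸ mem_support_iff.mp hk)
  exact mem_image.mpr ⟨i, mem_univ i, (mem_filter.mp hi).2⟩

end Polynomial

def dftMinor {R ι : Type*} [Monoid R] {p : ℕ} (ζ : R) (b s : ι → ZMod p) : Matrix ι ι R :=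
  Matrix.of fun i j => ζ ^ ((b i).val * (s j).val)

theorem map_eq_zero_of_dftMinor_mulVec_eq_zero {R F ι : Type*} [CommRing R] [IsDomain R]
    [CommRing F] [IsDomain F] {p : ℕ} [NeZero p] [CharP F p] [Fintype ι] {ζ : R}
    (hζ : IsPrimitiveRoot ζ p) (φ : R →+* F) (hφ : φ ζ = 1) {b s : ι → ZMod p}
    (hb : Function.Injective b) (hs : Function.Injective s) {c : ι → R}
    (hc : dftMinor ζ b s *ᵥ c = 0) (j : ι) : φ (c j) = 0 := by
  set g : R[X] := ∑ j, monomial (s j).val (c j)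
  have hmap : g.map φ = ∑ j, monomial (s j).val (φ (c j)) := by
    simp [g, Polynomial.map_sum]
  suffices g.map φ = 0 by
    calc φ (c j) = (g.map φ).coeff (s j).val := by
          rw [hmap]
          exact (coeff_sum_monomial_of_injective (fun j => (s j).val) (fun j => φ (c j))
            ((ZMod.val_injective p).comp hs) j).symm
      _ = 0 := by rw [this, coeff_zero]
  by_contra hg
  have hroot : ∀ i, g.IsRoot (ζ ^ (b i).val) := by
    intro i
    simpa [g, eval_finsetSum, dftMinor, Matrix.mulVec, dotProduct, ← pow_mul, mul_comm]
      using congrFun hc i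
  have hinj : Function.Injective fun i => ζ ^ (b i).val := fun i i' h =>
    hb (ZMod.val_injective p (hζ.pow_inj (ZMod.val_lt _) (ZMod.val_lt _) h))
  have hroots : (univ.val.map fun i => ζ ^ (b i).val) ≤ g.roots :=
    (Multiset.le_iff_subset (univ.nodup.map hinj)).mpr fun x hx => by
      obtain ⟨i, -, rfl⟩ := Multiset.mem_map.mp hx
      exact (mem_roots fun h => hg (by rw [h, Polynomial.map_zero])).mpr (hroot i)
  have hcount : Fintype.card ι ≤ (g.roots.map φ).count 1 := by
    rw [Multiset.le_count_iff_replicate_le]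
    simpa [Multiset.map_map, hφ] using Multiset.map_le_map (f := φ) hroots
  have hdvd : (X - C 1) ^ Fintype.card ι ∣ g.map φ :=
    (le_rootMultiplicity_iff hg).mp (hcount.trans (count_map_roots hg 1))
  have hdeg : (g.map φ).natDegree < p := by
    rw [hmap]
    refine (natDegree_sum_le_of_forall_le _ _ (n := p - 1) fun i _ =>
      (natDegree_monomial_le _).trans ?_).trans_lt (Nat.sub_lt (NeZero.pos p) one_pos)
    exact Nat.le_sub_one_of_lt (ZMod.val_lt _)
  refine not_X_sub_C_pow_card_support_dvd one_ne_zero hg hdeg ((pow_dvd_pow _ ?_).trans hdvd)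
  rw [hmap]
  exact card_support_sum_monomial_le _ _

namespace AdjoinRoot

instance {n : ℕ} [NeZero n] : IsDomain (AdjoinRoot (cyclotomic n ℤ)) :=
  isDomain_of_prime (cyclotomic.irreducible (NeZero.pos n)).prime

section Lift

variable {K : Type*} [Field K] {n : ℕ} [NeZero n] {ζ : K} (hζ : IsPrimitiveRoot ζ n)

noncomputable def cyclotomicLift : AdjoinRoot (cyclotomic n ℤ) →+* K :=
  lift (Int.castRingHom K) ζ <| by
    rw [← eval_map, map_cyclotomic]
    exact hζ.isRoot_cyclotomic (NeZero.pos n)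

theorem cyclotomicLift_root : cyclotomicLift hζ (root _) = ζ :=
  lift_root _

theorem cyclotomicLift_injective [CharZero K] : Function.Injective (cyclotomicLift hζ) := by
  refine (injective_iff_map_eq_zero _).mpr fun a ha => ?_
  induction a using AdjoinRoot.induction_on with
  | ih g =>
    rw [cyclotomicLift, lift_mk] at ha
    rw [mk_eq_zero, cyclotomic_eq_minpoly hζ (NeZero.pos n)]
    exact minpoly.isIntegrallyClosed_dvd (hζ.isIntegral (NeZero.pos n)) ha

end Lift

theorem isPrimitiveRoot_root_cyclotomic (n : ℕ) [NeZero n] :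
    IsPrimitiveRoot (root (cyclotomic n ℤ)) n := by
  have hζ := Complex.isPrimitiveRoot_exp n (NeZero.ne n)
  rw [← cyclotomicLift_root hζ] at hζ
  exact hζ.of_map_of_injective (cyclotomicLift_injective _)

section Residue

variable (p : ℕ) [Fact p.Prime]

noncomputable def cyclotomicResidue : AdjoinRoot (cyclotomic p ℤ) →+* ZMod p :=
  lift (Int.castRingHom (ZMod p)) 1 <| by
    rw [eval₂_at_one, eval_one_cyclotomic_prime, eq_intCast, Int.cast_natCast, ZMod.natCast_self]

theorem cyclotomicResidue_root : cyclotomicResidue p (root _) = 1 :=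
  lift_root _

theorem root_sub_one_dvd_of_cyclotomicResidue_eq_zero {a : AdjoinRoot (cyclotomic p ℤ)}
    (ha : cyclotomicResidue p a = 0) : root (cyclotomic p ℤ) - 1 ∣ a := by
  induction a using AdjoinRoot.induction_on with
  | ih g =>
    rw [cyclotomicResidue, lift_mk, eval₂_at_one, eq_intCast,
      ZMod.intCast_zmod_eq_zero_iff_dvd] at ha
    obtain ⟨c, hc⟩ := ha
    set ζ := root (cyclotomic p ℤ)
    have hp_dvd : ζ - 1 ∣ (p : AdjoinRoot (cyclotomic p ℤ)) := by
      have := sub_dvd_eval_sub ζ 1 (cyclotomic p (AdjoinRoot (cyclotomic p ℤ)))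
      rwa [((isPrimitiveRoot_root_cyclotomic p).isRoot_cyclotomic (NeZero.pos p)).eq_zero,
        eval_one_cyclotomic_prime, zero_sub, dvd_neg] at this
    have hg := sub_dvd_eval_sub ζ 1 (g.map (of _))
    rw [eval_map, eval_map, ← algebraMap_eq, ← aeval_def, aeval_eq, eval₂_at_one, hc,
      eq_intCast, Int.cast_mul, Int.cast_natCast] at hg
    exact (dvd_sub_left (dvd_mul_of_dvd_left hp_dvd _)).mp hg

end Residue

end AdjoinRoot

open AdjoinRoot in
theorem det_dftMinor_root_cyclotomic_ne_zero {p : ℕ} [Fact p.Prime] {ι : Type*} [Fintype ι]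
    [DecidableEq ι] {b s : ι → ZMod p} (hb : Function.Injective b) (hs : Function.Injective s) :
    (dftMinor (root (cyclotomic p ℤ)) b s).det ≠ 0 := by
  have hζ := isPrimitiveRoot_root_cyclotomic p
  have hπ0 : root (cyclotomic p ℤ) - 1 ≠ 0 :=
    sub_ne_zero.mpr (hζ.ne_one (Fact.out : p.Prime).one_lt)
  have hπ : ¬IsUnit (root (cyclotomic p ℤ) - 1) := fun h => by
    simpa [cyclotomicResidue_root] using h.map (cyclotomicResidue p)
  intro hdet
  obtain ⟨c, hc0, hc⟩ := Matrix.exists_mulVec_eq_zero_iff.mpr hdet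
  refine hc0 (Matrix.eq_zero_of_mulVec_eq_zero_of_forall_dvd hπ0 hπ (fun c hc j => ?_) hc)
  exact root_sub_one_dvd_of_cyclotomicResidue_eq_zero p
    (map_eq_zero_of_dftMinor_mulVec_eq_zero hζ _ (cyclotomicResidue_root p) hb hs hc j)

open AdjoinRoot in
theorem det_dftMinor_ne_zero {K : Type*} [Field K] [CharZero K] {p : ℕ} [Fact p.Prime] {ζ : K}
    (hζ : IsPrimitiveRoot ζ p) {ι : Type*} [Fintype ι] [DecidableEq ι] {b s : ι → ZMod p}
    (hb : Function.Injective b) (hs : Function.Injective s) : (dftMinor ζ b s).det ≠ 0 := by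
  have : dftMinor ζ b s = (cyclotomicLift hζ).mapMatrix (dftMinor (root _) b s) := by
    ext
    simp [dftMinor, cyclotomicLift_root]
  rw [this, ← RingHom.map_det]
  exact (map_ne_zero_iff _ (cyclotomicLift_injective hζ)).mpr
    (det_dftMinor_root_cyclotomic_ne_zero hb hs)

theorem dftMinor_mulVec_eq_fourierZMod {p : ℕ} [NeZero p] (f : ZMod p → ℂ) (S : Finset (ZMod p))
    (hS : ∀ x, f x ≠ 0 → x ∈ S) (b : S → ZMod p) :
    dftMinor (Complex.exp (2 * Real.pi * Complex.I / p)) b Subtype.val *ᵥ (fun x => f x) =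
      fun i => fourierZMod f (b i) := by
  funext i
  simp only [Matrix.mulVec, dotProduct, dftMinor, Matrix.of_apply, fourierZMod]
  refine (Finset.sum_coe_sort S fun x =>
    Complex.exp (2 * Real.pi * Complex.I / p) ^ ((b i).val * x.val) * f x).trans ?_
  rw [← sum_subset (subset_univ S)]
  · refine sum_congr rfl fun x _ => ?_
    rw [mul_comm, ← Complex.exp_nat_mul]
    congr 2
    push_cast
    ring
  · intro x _ hx
    rw [not_not.mp (mt (hS x) hx), zero_mul]

theorem stmt_1 {p : ℕ} (hp : p.Prime) (f : ZMod p → ℂ) (hf : f ≠ 0) :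
    haveI : NeZero p := ⟨hp.ne_zero⟩
    haveI : Fintype (ZMod p) := ZMod.fintype p
    p + 1 ≤
      (Finset.univ.filter fun x => f x ≠ 0).card +
      (Finset.univ.filter fun r => fourierZMod f r ≠ 0).card := by
  have : NeZero p := ⟨hp.ne_zero⟩
  have := Fact.mk hp
  set S := univ.filter fun x => f x ≠ 0
  set T := univ.filter fun r => fourierZMod f r ≠ 0
  by_contra! hlt
  obtain ⟨B, hBT, hB⟩ : ∃ B ⊆ Tᶜ, #B = #S :=
    exists_subset_card_eq (by rw [card_compl, ZMod.card]; omega)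
  let e : S ≃ B := Fintype.equivOfCardEq (by simp [hB])
  refine det_dftMinor_ne_zero (Complex.isPrimitiveRoot_exp p hp.ne_zero)
    (Subtype.val_injective.comp e.injective) Subtype.val_injective
    (Matrix.exists_mulVec_eq_zero_iff.mp ⟨fun x => f x, fun h => ?_, ?_⟩)
  · obtain ⟨x, hx⟩ := Function.ne_iff.mp hf
    exact hx (congrFun h ⟨x, by simpa [S] using hx⟩)
  · rw [dftMinor_mulVec_eq_fourierZMod f S fun x hx => by simpa [S] using hx]
    funext i
    simpa [T] using hBT (e i).2
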